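/- Let q be an algebro-geometric KdV potential and let x₀ ∈ ℂ be a pole of q. Then x₀ is a pole of q of order exactly 2, and there exists a positive integer s such that lim_{x→x₀} (x − x₀)² q(x) = −s(s+1); i.e., the leading term of the Laurent expansion of q about x₀ is −s(s+1)(x − x₀)⁻². -/

import Mathlib

open scoped BigOperators

noncomputable section

/-- `q` is an algebro-geometric KdV potential: there are `n ∈ ℕ₀` and meromorphic functions
`f₀ ≡ 1, f₁, …, f_n` such that `F(z,x) = ∑_{j=0}^n f_{n−j}(x) zʲ` satisfies
`∂ₓ³F + 4(q − z)∂ₓF + 2q'F = 0` away from the poles. -/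
def IsAGKdVPotential (q : ℂ → ℂ) : Prop :=
  MeromorphicOn q Set.univ ∧
  ∃ (n : ℕ) (f : ℕ → ℂ → ℂ), (∀ x, f 0 x = 1) ∧
    (∀ j ≤ n, MeromorphicOn (f j) Set.univ) ∧
    ∀ (z x : ℂ), AnalyticAt ℂ q x → (∀ j ≤ n, AnalyticAt ℂ (f j) x) →
      (∑ j ∈ Finset.range (n + 1), iteratedDeriv 3 (f (n - j)) x * z ^ j)
        + 4 * (q x - z) * (∑ j ∈ Finset.range (n + 1), deriv (f (n - j)) x * z ^ j)
        + 2 * deriv q x * (∑ j ∈ Finset.range (n + 1), f (n - j) x * z ^ j) = 0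

open Filter Topology

/-!
Near a pole `x₀` write `q ~ a (x - x₀)^k` and `R φ = φ''' + 4 q φ' + 2 q' φ`. Comparing powers
of `z` in the defining identity gives the Lenard recursion `R f_j = 4 f_{j+1}'` for `j < n` and
`R f_n = 0`. Starting from `f_0 = 1`, track leading terms `f_j ~ b_j (x - x₀)^{μ_j}`: the leading
term of `R f_j` comes from `f_j'''` if `k = -1`, from `4 q f_j' + 2 q' f_j` if `k ≤ -3`
(coefficient `2 a b_j (2 μ_j + k)`), and from all three terms if `k = -2`, where `μ_j = -2j` and
the coefficient is `-4 b_j (2j + 1)(j (j + 1) + a)`. Unless `k = -2` and `a = -s(s+1)` with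
`s ≥ 1`, it never vanishes, so integrating the recursion gives every `f_j` a nonzero leading
term, and then `R f_n` has one too.
-/

-- `b = 0` is allowed: then `k` is only a lower bound for the order of `f` at `x₀`.
def HasLeadingTerm (f : ℂ → ℂ) (x₀ : ℂ) (k : ℤ) (b : ℂ) : Prop :=
  ∃ g : ℂ → ℂ, AnalyticAt ℂ g x₀ ∧ g x₀ = b ∧ f =ᶠ[𝓝[≠] x₀] fun z => (z - x₀) ^ k * g z

theorem MeromorphicAt.exists_hasLeadingTerm {f : ℂ → ℂ} {x₀ : ℂ} {k : ℤ} (hf : MeromorphicAt f x₀)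
    (hk : meromorphicOrderAt f x₀ = k) : ∃ b ≠ 0, HasLeadingTerm f x₀ k b := by
  obtain ⟨g, hg, hgx, hev⟩ := (meromorphicOrderAt_eq_int_iff hf).mp hk
  exact ⟨g x₀, hgx, g, hg, rfl, hev⟩

namespace HasLeadingTerm

variable {f g : ℂ → ℂ} {x₀ b c : ℂ} {k l : ℤ}

theorem congr (hf : HasLeadingTerm f x₀ k b) (hfg : f =ᶠ[𝓝[≠] x₀] g) :
    HasLeadingTerm g x₀ k b := by
  obtain ⟨φ, hφ, hφx, hev⟩ := hf
  exact ⟨φ, hφ, hφx, hfg.symm.trans hev⟩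

theorem of_eventually_eq_zero (h : ∀ᶠ z in 𝓝[≠] x₀, f z = 0) : HasLeadingTerm f x₀ k 0 :=
  ⟨0, analyticAt_const, rfl, by filter_upwards [h] with z hz; simp [hz]⟩

theorem tendsto (hf : HasLeadingTerm f x₀ k b) :
    Tendsto (fun z => (z - x₀) ^ (-k) * f z) (𝓝[≠] x₀) (𝓝 b) := by
  obtain ⟨φ, hφ, rfl, hev⟩ := hf
  refine hφ.continuousAt.continuousWithinAt.tendsto.congr' ?_
  filter_upwards [hev, self_mem_nhdsWithin] with z hz hne
  rw [hz, ← mul_assoc, ← zpow_add₀ (sub_ne_zero.mpr hne), neg_add_cancel, zpow_zero, one_mul]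

theorem coeff_unique (h₁ : HasLeadingTerm f x₀ k b) (h₂ : HasLeadingTerm f x₀ k c) : b = c :=
  tendsto_nhds_unique h₁.tendsto h₂.tendsto

theorem zero_of_lt (hf : HasLeadingTerm f x₀ k b) (hlk : l < k) : HasLeadingTerm f x₀ l 0 := by
  obtain ⟨φ, hφ, rfl, hev⟩ := hf
  refine ⟨fun z => (z - x₀) ^ (k - l).toNat * φ z, by fun_prop,
    by simp [show (k - l).toNat ≠ 0 by omega], ?_⟩
  filter_upwards [hev, self_mem_nhdsWithin] with z hz hne
  rw [hz, ← mul_assoc, ← zpow_natCast, ← zpow_add₀ (sub_ne_zero.mpr hne)]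
  congr 2
  omega

theorem coeff_eq_zero_of_lt (h₁ : HasLeadingTerm f x₀ k b) (h₂ : HasLeadingTerm f x₀ l c)
    (hkl : k < l) : b = 0 :=
  h₁.coeff_unique (h₂.zero_of_lt hkl)

theorem const_mul (hf : HasLeadingTerm f x₀ k b) (c : ℂ) :
    HasLeadingTerm (fun z => c * f z) x₀ k (c * b) := by
  obtain ⟨φ, hφ, rfl, hev⟩ := hf
  exact ⟨fun z => c * φ z, analyticAt_const.mul hφ, rfl,
    by filter_upwards [hev] with z hz; rw [hz]; ring⟩

theorem add (hf : HasLeadingTerm f x₀ k b) (hg : HasLeadingTerm g x₀ k c) :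
    HasLeadingTerm (fun z => f z + g z) x₀ k (b + c) := by
  obtain ⟨φ, hφ, rfl, hevf⟩ := hf
  obtain ⟨ψ, hψ, rfl, hevg⟩ := hg
  exact ⟨fun z => φ z + ψ z, hφ.add hψ, rfl,
    by filter_upwards [hevf, hevg] with z hf hg; rw [hf, hg]; ring⟩

theorem mul (hf : HasLeadingTerm f x₀ k b) (hg : HasLeadingTerm g x₀ l c) :
    HasLeadingTerm (fun z => f z * g z) x₀ (k + l) (b * c) := by
  obtain ⟨φ, hφ, rfl, hevf⟩ := hf
  obtain ⟨ψ, hψ, rfl, hevg⟩ := hg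
  refine ⟨fun z => φ z * ψ z, hφ.mul hψ, rfl, ?_⟩
  filter_upwards [hevf, hevg, self_mem_nhdsWithin] with z hf hg hne
  rw [hf, hg, zpow_add₀ (sub_ne_zero.mpr hne)]
  ring

protected theorem deriv (hf : HasLeadingTerm f x₀ k b) :
    HasLeadingTerm (deriv f) x₀ (k - 1) (k * b) := by
  obtain ⟨φ, hφ, rfl, hev⟩ := hf
  refine ⟨fun z => k * φ z + (z - x₀) * deriv φ z, by fun_prop, by simp, ?_⟩
  filter_upwards [hev.nhdsNE_deriv,
    eventually_nhdsWithin_of_eventually_nhds hφ.eventually_analyticAt, self_mem_nhdsWithin]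
    with z hz hφz hne
  have hne' : z - x₀ ≠ 0 := sub_ne_zero.mpr hne
  have hpow : HasDerivAt (fun w => (w - x₀) ^ k) (k * (z - x₀) ^ (k - 1)) z :=
    (hasDerivAt_zpow k (z - x₀) (Or.inl hne')).comp_sub_const z x₀
  rw [hz, (hpow.fun_mul hφz.differentiableAt.hasDerivAt).deriv,
    show (z - x₀) ^ k = (z - x₀) ^ (k - 1) * (z - x₀) by rw [← zpow_add_one₀ hne', sub_add_cancel]]
  ring

theorem of_deriv (hf : MeromorphicAt f x₀) (hd : HasLeadingTerm (deriv f) x₀ (k - 1) c)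
    (hc : c ≠ 0) (hk : k ≤ -1) : HasLeadingTerm f x₀ k (c / k) := by
  cases hord : meromorphicOrderAt f x₀ with
  | top =>
    have hzero : HasLeadingTerm (deriv f) x₀ (k - 1) 0 := of_eventually_eq_zero <| by
      have hf0 : f =ᶠ[𝓝[≠] x₀] fun _ => 0 := meromorphicOrderAt_eq_top_iff.mp hord
      filter_upwards [hf0.nhdsNE_deriv] with z hz
      simpa using hz
    exact absurd (hd.coeff_unique hzero) hc
  | coe p =>
    obtain ⟨b, hb, hfb⟩ := hf.exists_hasLeadingTerm hord
    rcases lt_trichotomy p k with hpk | rfl | hkp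
    · have : (p : ℂ) * b = 0 := hfb.deriv.coeff_eq_zero_of_lt hd (by omega)
      have hp : p = 0 := by simpa [hb] using this
      omega
    · rwa [← hfb.deriv.coeff_unique hd, mul_div_cancel_left₀ _ (by norm_cast; omega)]
    · exact absurd (hd.coeff_eq_zero_of_lt hfb.deriv (by omega)) hc

end HasLeadingTerm

/-- Four times the operator of the Lenard recursion `f_{j+1}' = ¼ f_j''' + q f_j' + ½ q' f_j`. -/
def kdvOp (q φ : ℂ → ℂ) (x : ℂ) : ℂ :=
  iteratedDeriv 3 φ x + 4 * q x * deriv φ x + 2 * deriv q x * φ x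

namespace HasLeadingTerm

variable {q φ : ℂ → ℂ} {x₀ a b : ℂ} {k μ : ℤ}

theorem iteratedDeriv_three (hφ : HasLeadingTerm φ x₀ μ b) :
    HasLeadingTerm (iteratedDeriv 3 φ) x₀ (μ - 3) (μ * (μ - 1) * (μ - 2) * b) := by
  rw [iteratedDeriv_succ, iteratedDeriv_succ, iteratedDeriv_one]
  convert hφ.deriv.deriv.deriv using 1 <;> push_cast <;> ring

theorem kdvOp_sub_iteratedDeriv (hq : HasLeadingTerm q x₀ k a)
    (hφ : HasLeadingTerm φ x₀ μ b) :
    HasLeadingTerm (fun x => kdvOp q φ x - iteratedDeriv 3 φ x) x₀ (μ + k - 1)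
      (2 * a * b * (2 * μ + k)) := by
  have h₁ := (hq.mul hφ.deriv).const_mul 4
  have h₂ := (hq.deriv.mul hφ).const_mul 2
  rw [show k + (μ - 1) = μ + k - 1 by ring] at h₁
  rw [show k - 1 + μ = μ + k - 1 by ring] at h₂
  convert h₁.add h₂ using 1
  · funext x
    simp only [kdvOp]
    ring
  · ring

theorem kdvOp_of_simple_pole (hq : HasLeadingTerm q x₀ (-1) a)
    (hφ : HasLeadingTerm φ x₀ μ b) :
    HasLeadingTerm (kdvOp q φ) x₀ (μ - 3) (μ * (μ - 1) * (μ - 2) * b) := by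
  have h := hφ.iteratedDeriv_three.add ((hq.kdvOp_sub_iteratedDeriv hφ).zero_of_lt (by omega))
  rw [add_zero] at h
  exact h.congr (Eventually.of_forall fun x => add_sub_cancel _ _)

theorem kdvOp_of_double_pole (hq : HasLeadingTerm q x₀ (-2) a)
    (hφ : HasLeadingTerm φ x₀ μ b) :
    HasLeadingTerm (kdvOp q φ) x₀ (μ - 3)
      (b * (μ * (μ - 1) * (μ - 2) + 4 * a * μ - 4 * a)) := by
  have hpot := hq.kdvOp_sub_iteratedDeriv hφ
  rw [show μ + -2 - 1 = μ - 3 by ring] at hpot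
  convert (hφ.iteratedDeriv_three.add hpot).congr
    (Eventually.of_forall fun x => add_sub_cancel _ _) using 1
  push_cast
  ring

theorem kdvOp_of_le_neg_three (hk : k ≤ -3) (hq : HasLeadingTerm q x₀ k a)
    (hφ : HasLeadingTerm φ x₀ μ b) :
    HasLeadingTerm (kdvOp q φ) x₀ (μ + k - 1) (2 * a * b * (2 * μ + k)) := by
  have h := (hφ.iteratedDeriv_three.zero_of_lt (by omega)).add (hq.kdvOp_sub_iteratedDeriv hφ)
  rw [zero_add] at h
  exact h.congr (Eventually.of_forall fun x => add_sub_cancel _ _)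

end HasLeadingTerm

theorem coeffs_eq_of_forall_sum_eq_mul_sum {R : Type*} [CommRing R] [IsDomain R] [Infinite R]
    (n : ℕ) (c : R) (D B : ℕ → R)
    (h : ∀ z : R, ∑ j ∈ Finset.range (n + 1), D (n - j) * z ^ j
      = c * z * ∑ j ∈ Finset.range (n + 1), B (n - j) * z ^ j) :
    (∀ i < n, D i = c * B (i + 1)) ∧ D n = 0 := by
  let P (a : ℕ → R) : Polynomial R :=
    ∑ j ∈ Finset.range (n + 1), Polynomial.C (a (n - j)) * Polynomial.X ^ j
  have hcoeff (a : ℕ → R) (k : ℕ) : (P a).coeff k = if k < n + 1 then a (n - k) else 0 := by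
    simp [P]
  have hP : P D = Polynomial.C c * (Polynomial.X * P B) := Polynomial.funext fun z => by
    simpa [P, Polynomial.eval_finsetSum, mul_assoc] using h z
  refine ⟨fun i hi => ?_, ?_⟩
  · obtain ⟨m, hm⟩ : ∃ m, n - i = m + 1 := ⟨n - i - 1, by omega⟩
    have := congr_arg (Polynomial.coeff · (n - i)) hP
    simp only [Polynomial.coeff_C_mul, hm, Polynomial.coeff_X_mul, hcoeff] at this
    rwa [if_pos (by omega), if_pos (by omega), ← hm, Nat.sub_sub_self hi.le,
      show n - m = i + 1 by omega] at this
  · simpa [Polynomial.coeff_C_mul, hcoeff] using congr_arg (Polynomial.coeff · 0) hP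

-- The coefficients of `zʲ` in the defining identity of `IsAGKdVPotential`, near `x₀`.
structure LenardChainAt (q : ℂ → ℂ) (f : ℕ → ℂ → ℂ) (n : ℕ) (x₀ : ℂ) : Prop where
  zero_eq_one : ∀ x, f 0 x = 1
  meromorphicAt : ∀ j ≤ n, MeromorphicAt (f j) x₀
  kdvOp_eq : ∀ i < n, ∀ᶠ x in 𝓝[≠] x₀, kdvOp q (f i) x = 4 * deriv (f (i + 1)) x
  kdvOp_last : ∀ᶠ x in 𝓝[≠] x₀, kdvOp q (f n) x = 0

theorem IsAGKdVPotential.exists_lenardChainAt {q : ℂ → ℂ} (hq : IsAGKdVPotential q) (x₀ : ℂ) :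
    ∃ n f, LenardChainAt q f n x₀ := by
  obtain ⟨hqm, n, f, hf₀, hfm, hF⟩ := hq
  have hreg : ∀ᶠ x in 𝓝[≠] x₀, AnalyticAt ℂ q x ∧ ∀ j ≤ n, AnalyticAt ℂ (f j) x :=
    (hqm x₀ trivial).eventually_analyticAt.and <| (eventually_all_finite (Set.finite_Iic n)).2
      fun j hj => (hfm j hj x₀ trivial).eventually_analyticAt
  have hrec : ∀ᶠ x in 𝓝[≠] x₀,
      (∀ i < n, kdvOp q (f i) x = 4 * deriv (f (i + 1)) x) ∧ kdvOp q (f n) x = 0 := by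
    filter_upwards [hreg] with x ⟨hqx, hfx⟩
    refine coeffs_eq_of_forall_sum_eq_mul_sum n 4 (fun i => kdvOp q (f i) x)
      (fun i => deriv (f i) x) fun z => ?_
    have h := hF z x hqx hfx
    rw [Finset.mul_sum, Finset.mul_sum, ← Finset.sum_add_distrib, ← Finset.sum_add_distrib] at h
    rw [Finset.mul_sum, ← sub_eq_zero, ← Finset.sum_sub_distrib]
    exact (Finset.sum_congr rfl fun j _ => by simp only [kdvOp]; ring).trans h
  exact ⟨n, f, hf₀, fun j hj => hfm j hj x₀ trivial, fun i hi => hrec.mono fun x hx => hx.1 i hi,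
    hrec.mono fun x hx => hx.2⟩

namespace LenardChainAt

variable {q : ℂ → ℂ} {f : ℕ → ℂ → ℂ} {n : ℕ} {x₀ a : ℂ} {k : ℤ}

-- Integrating `kdvOp q (f j) = 4 f_{j+1}'` passes a nonzero leading term from `f j` to
-- `f (j + 1)`; the one of `kdvOp q (f n)` then contradicts `kdvOp q (f n) = 0`.
theorem false_of_leadingTerm_step (h : LenardChainAt q f n x₀) (μ : ℕ → ℤ) (hμ₀ : μ 0 = 0)
    (hμ : ∀ j, μ (j + 1) ≤ -1)
    (hstep : ∀ j b, b ≠ 0 → HasLeadingTerm (f j) x₀ (μ j) b →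
      ∃ L ≠ 0, HasLeadingTerm (kdvOp q (f j)) x₀ (μ (j + 1) - 1) L) : False := by
  have hlead : ∀ j ≤ n, ∃ b ≠ 0, HasLeadingTerm (f j) x₀ (μ j) b := by
    intro j
    induction j with
    | zero =>
      refine fun _ => ⟨1, one_ne_zero, fun _ => 1, analyticAt_const, rfl, ?_⟩
      exact Eventually.of_forall fun x => by simp [hμ₀, h.zero_eq_one]
    | succ j ih =>
      intro hj
      obtain ⟨b, hb, hfj⟩ := ih (by omega)
      obtain ⟨L, hL, hR⟩ := hstep j b hb hfj
      have hderiv : HasLeadingTerm (deriv (f (j + 1))) x₀ (μ (j + 1) - 1) (4⁻¹ * L) :=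
        ((hR.congr (h.kdvOp_eq j (by omega))).const_mul 4⁻¹).congr
          (Eventually.of_forall fun x => inv_mul_cancel_left₀ (by norm_num : (4 : ℂ) ≠ 0) _)
      have hL' : 4⁻¹ * L ≠ 0 := mul_ne_zero (by norm_num) hL
      have hμ' : (μ (j + 1) : ℂ) ≠ 0 := by exact_mod_cast (show μ (j + 1) ≠ 0 by linarith [hμ j])
      exact ⟨_, div_ne_zero hL' hμ', hderiv.of_deriv (h.meromorphicAt _ hj) hL' (hμ j)⟩
  obtain ⟨b, hb, hfn⟩ := hlead n le_rfl
  obtain ⟨L, hL, hR⟩ := hstep n b hb hfn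
  exact hL (hR.coeff_unique (.of_eventually_eq_zero h.kdvOp_last))

theorem false_of_simple_pole (h : LenardChainAt q f n x₀) (hq : HasLeadingTerm q x₀ (-1) a)
    (ha : a ≠ 0) : False := by
  refine h.false_of_leadingTerm_step (fun j => if j = 0 then 0 else 1 - 2 * j) rfl
    (fun j => by simp only [Nat.add_one_ne_zero, if_false]; omega) ?_
  rintro (_ | j) b hb hfj
  · have hf₀ : f 0 = fun _ => 1 := funext h.zero_eq_one
    refine ⟨-2 * a, by simpa using ha, ?_⟩
    convert hq.deriv.const_mul 2 using 1
    · funext x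
      simp [kdvOp, hf₀, iteratedDeriv_const]
    · norm_num
    · push_cast
      ring
  · refine ⟨-((2 * j + 1) * (2 * j + 2) * (2 * j + 3)) * b, ?_, ?_⟩
    · have : ((2 * j + 1) * (2 * j + 2) * (2 * j + 3) : ℂ) ≠ 0 := by
        exact_mod_cast (show (2 * j + 1) * (2 * j + 2) * (2 * j + 3) ≠ 0 by positivity)
      simp [this, hb]
    · simp only [Nat.add_one_ne_zero, if_false] at hfj ⊢
      convert hq.kdvOp_of_simple_pole hfj using 1 <;> push_cast <;> ring

theorem false_of_le_neg_three (h : LenardChainAt q f n x₀) (hk : k ≤ -3)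
    (hq : HasLeadingTerm q x₀ k a) (ha : a ≠ 0) : False := by
  refine h.false_of_leadingTerm_step (fun j => j * k) (by simp) (fun j => by push_cast; nlinarith)
    fun j b hb hfj => ⟨2 * a * b * ((2 * j + 1) * k), ?_, ?_⟩
  · have : (2 * j + 1 : ℂ) ≠ 0 := by exact_mod_cast (show 2 * j + 1 ≠ 0 by omega)
    have hk' : (k : ℂ) ≠ 0 := by exact_mod_cast (show k ≠ 0 by omega)
    simp [ha, this, hk', hb]
  · convert hq.kdvOp_of_le_neg_three hk hfj using 1 <;> push_cast <;> ring

theorem exists_eq_neg_mul_succ_of_double_pole (h : LenardChainAt q f n x₀)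
    (hq : HasLeadingTerm q x₀ (-2) a) (ha : a ≠ 0) : ∃ s : ℕ, 0 < s ∧ a = -(s * (s + 1)) := by
  by_contra! hne
  refine h.false_of_leadingTerm_step (fun j => -2 * j) (by simp) (fun j => by push_cast; omega)
    fun j b hb hfj => ⟨b * (-4 * (2 * j + 1) * (j * (j + 1) + a)), ?_, ?_⟩
  · have h₁ : (2 * j + 1 : ℂ) ≠ 0 := by exact_mod_cast (show 2 * j + 1 ≠ 0 by omega)
    have h₂ : (j * (j + 1) + a : ℂ) ≠ 0 := by
      rcases Nat.eq_zero_or_pos j with rfl | hj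
      · simpa using ha
      · exact fun h0 => hne j hj (by linear_combination h0)
    simp [hb, h₁, h₂]
  · convert hq.kdvOp_of_double_pole hfj using 1 <;> push_cast <;> ring

end LenardChainAt

/-- **Pole structure of algebro-geometric KdV potentials.** Every pole `x₀` of an
algebro-geometric KdV potential `q` is a pole of order exactly `2`, and the leading Laurent
coefficient is `−s(s+1)` for some positive integer `s`, i.e.
`(x − x₀)² q(x) → −s(s+1)` as `x → x₀`. -/
theorem agkdv_pole_structure
    (q : ℂ → ℂ) (hq : IsAGKdVPotential q)
    (x₀ : ℂ) (hpole : meromorphicOrderAt q x₀ < 0) :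
    meromorphicOrderAt q x₀ = ((-2 : ℤ) : WithTop ℤ) ∧
    ∃ s : ℕ, 0 < s ∧
      Filter.Tendsto (fun x => (x - x₀) ^ 2 * q x) (nhdsWithin x₀ {x₀}ᶜ)
        (nhds (-((s : ℂ) * ((s : ℂ) + 1)))) := by
  obtain ⟨n, f, hchain⟩ := hq.exists_lenardChainAt x₀
  obtain ⟨k, hk⟩ := WithTop.ne_top_iff_exists.mp hpole.ne_top
  obtain ⟨a, ha, hqa⟩ := (hq.1 x₀ trivial).exists_hasLeadingTerm hk.symm
  have hk₀ : k < 0 := by rw [← hk] at hpole; exact_mod_cast hpole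
  obtain rfl | rfl | hk₃ : k = -1 ∨ k = -2 ∨ k ≤ -3 := by omega
  · exact (hchain.false_of_simple_pole hqa ha).elim
  · obtain ⟨s, hs, rfl⟩ := hchain.exists_eq_neg_mul_succ_of_double_pole hqa ha
    exact ⟨hk.symm, s, hs, by simpa using hqa.tendsto⟩
  · exact (hchain.false_of_le_neg_three hk₃ hqa ha).elim
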